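/- arXiv:1609.06601 — 6 statements merged into one kernel-verified Lean document; each statement's English description precedes it below -/
import Mathlib

section
/- Let (A,σ) be an F-algebra with involution and let 𝒫 ⊆ 𝒬 be two prepositive cones on (A,σ). Then 𝒫_F = 𝒬_F. -/
open Pointwise

/-- An ordering on a field `F`. -/
def IsOrdering {F : Type*} [Field F] (P : Set F) : Prop :=
  (∀ x ∈ P, ∀ y ∈ P, x + y ∈ P) ∧ (∀ x ∈ P, ∀ y ∈ P, x * y ∈ P) ∧
  (∀ x : F, x ∈ P ∨ -x ∈ P) ∧ (∀ x ∈ P, -x ∈ P → x = 0)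

/-- A prepositive cone on an `F`-algebra with involution `(A, star)`:
a subset of the symmetric elements which is nonempty, closed under addition,
closed under `p ↦ star x * p * x`, whose set of preserving scalars is an ordering
of `F`, and which is proper (`PC ∩ -PC = {0}`). -/
def IsPrepositiveCone (F : Type*) {A : Type*} [Field F] [Ring A] [Algebra F A] [StarRing A]
    (PC : Set A) : Prop :=
  (∀ a ∈ PC, star a = a) ∧ PC.Nonempty ∧ (∀ a ∈ PC, ∀ b ∈ PC, a + b ∈ PC) ∧
  (∀ x : A, ∀ p ∈ PC, star x * p * x ∈ PC) ∧
  IsOrdering {u : F | ∀ p ∈ PC, u • p ∈ PC} ∧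
  (∀ a ∈ PC, -a ∈ PC → a = 0)

/-- A prepositive cone over the ordering `P` of `F`. -/
def IsPrepositiveConeOver (F : Type*) {A : Type*} [Field F] [Ring A] [Algebra F A] [StarRing A]
    (P : Set F) (PC : Set A) : Prop :=
  IsPrepositiveCone F PC ∧ {u : F | ∀ p ∈ PC, u • p ∈ PC} = P

namespace IsOrdering

variable {F : Type*} [Field F] {P Q : Set F}

theorem zero_mem (hP : IsOrdering P) : (0 : F) ∈ P := by
  simpa using hP.2.2.1 0

theorem eq_of_subset (hP : IsOrdering P) (hQ : IsOrdering Q) (hPQ : P ⊆ Q) : P = Q := by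
  refine hPQ.antisymm fun u huQ => ?_
  rcases hP.2.2.1 u with huP | hnegP
  · exact huP
  · rw [hQ.2.2.2 u huQ (hPQ hnegP)]
    exact hP.zero_mem

end IsOrdering

namespace IsPrepositiveCone

variable {F A : Type*} [Field F] [Ring A] [Algebra F A] [StarRing A] {PC QC : Set A}

/-- Were `PC = {0}`, every scalar would preserve it, and `-1` would be positive. -/
theorem exists_ne_zero (hPC : IsPrepositiveCone F PC) : ∃ p ∈ PC, p ≠ 0 := by
  obtain ⟨-, ⟨a, ha⟩, -, -, ⟨-, -, -, hproper⟩, -⟩ := hPC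
  by_contra! hzero
  have hall : ∀ u : F, ∀ p ∈ PC, u • p ∈ PC := fun u p hp => by
    rwa [hzero p hp, smul_zero, ← hzero a ha]
  exact one_ne_zero (hproper 1 (hall 1) (hall (-1)))

theorem scalars_subset (hPC : IsPrepositiveCone F PC) (hQC : IsPrepositiveCone F QC)
    (hsub : PC ⊆ QC) :
    {u : F | ∀ p ∈ PC, u • p ∈ PC} ⊆ {u : F | ∀ q ∈ QC, u • q ∈ QC} := by
  intro u hu
  obtain ⟨p, hp, hp0⟩ := hPC.exists_ne_zero
  obtain ⟨-, -, -, -, hQF, hQproper⟩ := hQC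
  rcases hQF.2.2.1 u with huQ | hnegQ
  · exact huQ
  · have hup : u • p = 0 := hQproper _ (hsub (hu p hp)) (by simpa using hnegQ p (hsub hp))
    rw [(smul_eq_zero.mp hup).resolve_right hp0]
    exact hQF.zero_mem

end IsPrepositiveCone

theorem stmt_5_general {F A : Type*} [Field F] [Ring A] [Algebra F A] [StarRing A]
    (PC QC : Set A) (hPC : IsPrepositiveCone F PC) (hQC : IsPrepositiveCone F QC)
    (hsub : PC ⊆ QC) :
    {u : F | ∀ p ∈ PC, u • p ∈ PC} = {u : F | ∀ q ∈ QC, u • q ∈ QC} :=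
  hPC.2.2.2.2.1.eq_of_subset hQC.2.2.2.2.1 (hPC.scalars_subset hQC hsub)

/-- If `PC ⊆ QC` are prepositive cones on `(A,σ)`, then `PC_F = QC_F`. -/
theorem stmt_5 {F A : Type*} [Field F] [Ring A] [Algebra F A] [StarRing A]
    [FiniteDimensional F A] (h2 : (2 : F) ≠ 0)
    (hstar : ∀ c : F, star (algebraMap F A c) = algebraMap F A c)
    (PC QC : Set A) (hPC : IsPrepositiveCone F PC) (hQC : IsPrepositiveCone F QC)
    (hsub : PC ⊆ QC) :
    {u : F | ∀ p ∈ PC, u • p ∈ PC} = {u : F | ∀ q ∈ QC, u • q ∈ QC} :=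
  stmt_5_general PC QC hPC hQC hsub
end

section
/- Let (A,σ) be an F-algebra with involution, 𝒫 a positive cone on (A,σ) over P ∈ X_F (i.e., a prepositive cone maximal with respect to inclusion with 𝒫_F = P), and a ∈ Sym(A,σ) \ 𝒫. Then there exist k ∈ ℕ, u_1,…,u_k ∈ P \ {0} and x_1,…,x_k ∈ A \ {0} such that Σ_{i=1}^k u_i σ(x_i) a x_i ∈ -𝒫. -/
open Pointwise

/-! Suppose no such sum exists, and let `S` be the additive monoid of all sums
`∑ uᵢ σ(xᵢ) a xᵢ` with `uᵢ ∈ P`. Then `PC + S` is again a prepositive cone: properness and the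
antisymmetry of its scalar ordering both reduce to "`-(s + t) ∈ PC` with `s, t ∈ S` forces
`t = 0`", and a counterexample to that would, after dropping its zero terms, be the sum we
assumed not to exist. As `a ∈ PC + S`, this contradicts the maximality of `PC`. -/

section Orderings

variable {F : Type*} [Field F] {P : Set F}

theorem IsOrdering.one_mem (hP : IsOrdering P) : (1 : F) ∈ P := by
  rcases hP.2.2.1 1 with h | h
  · exact h
  · simpa using hP.2.1 _ h _ h

theorem IsOrdering.isOrdering_stabilizer {M : Type*} [AddCommGroup M] [Module F M]
    (hP : IsOrdering P) {C : Set M} (hadd : ∀ a ∈ C, ∀ b ∈ C, a + b ∈ C)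
    (hsub : ∀ v ∈ P, ∀ c ∈ C, v • c ∈ C)
    (hanti : ∀ v ∈ P, (∀ c ∈ C, (-v) • c ∈ C) → v = 0) :
    IsOrdering {u : F | ∀ c ∈ C, u • c ∈ C} := by
  refine ⟨fun v hv w hw c hc => ?_, fun v hv w hw c hc => ?_, fun v => ?_, fun v hv hnv => ?_⟩
  · rw [add_smul]
    exact hadd _ (hv c hc) _ (hw c hc)
  · rw [mul_smul]
    exact hv _ (hw c hc)
  · exact (hP.2.2.1 v).imp (hsub v) (hsub (-v))
  · rcases hP.2.2.1 v with h | h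
    · exact hanti v h hnv
    · exact neg_eq_zero.mp (hanti (-v) h (by simpa using hv))

end Orderings

theorem Fin.exists_enum_support_sum_eq {M : Type*} [AddCommMonoid M] {k : ℕ} (f : Fin k → M) :
    ∃ (m : ℕ) (e : Fin m → Fin k), (∀ j, f (e j) ≠ 0) ∧ (∀ i, f i ≠ 0 → ∃ j, e j = i) ∧
      ∑ j, f (e j) = ∑ i, f i := by
  classical
  set T := Finset.univ.filter fun i => f i ≠ 0
  refine ⟨T.card, T.orderEmbOfFin rfl,
    fun j => (Finset.mem_filter.mp (T.orderEmbOfFin_mem rfl j)).2, fun i hi => ?_, ?_⟩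
  · rw [← Set.mem_range, Finset.range_orderEmbOfFin]
    simpa [T] using hi
  · calc ∑ j, f (T.orderEmbOfFin rfl j)
        = ∑ i ∈ Finset.univ.map (T.orderEmbOfFin rfl).toEmbedding, f i := (Finset.sum_map ..).symm
      _ = ∑ i ∈ T, f i := by rw [Finset.map_orderEmbOfFin_univ]
      _ = ∑ i, f i := Finset.sum_filter_ne_zero _

section ConjSums

variable {F A : Type*} [Field F] [Ring A] [Algebra F A] [StarRing A]

def conjSum (a : A) {k : ℕ} (u : Fin k → F) (x : Fin k → A) : A :=
  ∑ i, u i • (star (x i) * a * x i)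

theorem conjSum_append (a : A) {k l : ℕ} (u : Fin k → F) (v : Fin l → F) (x : Fin k → A)
    (y : Fin l → A) :
    conjSum a (Fin.append u v) (Fin.append x y) = conjSum a u x + conjSum a v y := by
  simp [conjSum, Fin.sum_univ_add]

theorem conjSum_mul_right (a : A) {k : ℕ} (u : Fin k → F) (x : Fin k → A) (z : A) :
    conjSum a u (fun i => x i * z) = star z * conjSum a u x * z := by
  simp only [conjSum, Finset.mul_sum, Finset.sum_mul, star_mul, mul_smul_comm, smul_mul_assoc,
    mul_assoc]

theorem smul_conjSum (a : A) {k : ℕ} (w : F) (u : Fin k → F) (x : Fin k → A) :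
    w • conjSum a u x = conjSum a (fun i => w * u i) x := by
  simp only [conjSum, Finset.smul_sum, smul_smul]

theorem conjSum_one (a : A) (v : F) : conjSum a (fun _ : Fin 1 => v) (fun _ => 1) = v • a := by
  simp [conjSum]

theorem star_smul_of_star_algebraMap (hstar : ∀ c : F, star (algebraMap F A c) = algebraMap F A c)
    (u : F) (b : A) : star (u • b) = u • star b := by
  rw [Algebra.smul_def, star_mul, hstar, ← Algebra.commutes, ← Algebra.smul_def]

theorem star_conjSum (hstar : ∀ c : F, star (algebraMap F A c) = algebraMap F A c) {a : A}
    (ha : star a = a) {k : ℕ} (u : Fin k → F) (x : Fin k → A) :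
    star (conjSum a u x) = conjSum a u x := by
  simp only [conjSum, star_sum, star_smul_of_star_algebraMap hstar, star_mul, star_star, ha,
    mul_assoc]

def conjSums (P : Set F) (a : A) : AddSubmonoid A where
  carrier := {s | ∃ (k : ℕ) (u : Fin k → F) (x : Fin k → A), (∀ i, u i ∈ P) ∧ conjSum a u x = s}
  zero_mem' := ⟨0, Fin.elim0, Fin.elim0, fun i => i.elim0, by simp [conjSum]⟩
  add_mem' := by
    rintro _ _ ⟨k, u, x, hu, rfl⟩ ⟨l, v, y, hv, rfl⟩
    exact ⟨k + l, Fin.append u v, Fin.append x y, Fin.addCases (by simpa using hu)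
      (by simpa using hv), conjSum_append ..⟩

variable {P : Set F} {a : A}

theorem mem_conjSums {s : A} : s ∈ conjSums P a ↔
    ∃ (k : ℕ) (u : Fin k → F) (x : Fin k → A), (∀ i, u i ∈ P) ∧ conjSum a u x = s :=
  Iff.rfl

theorem smul_mem_conjSums {v : F} (hv : v ∈ P) : v • a ∈ conjSums P a :=
  mem_conjSums.mpr ⟨1, fun _ => v, fun _ => 1, fun _ => hv, conjSum_one a v⟩

theorem star_mul_mul_mem_conjSums {s : A} (hs : s ∈ conjSums P a) (z : A) :
    star z * s * z ∈ conjSums P a := by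
  obtain ⟨k, u, x, hu, rfl⟩ := mem_conjSums.mp hs
  exact mem_conjSums.mpr ⟨k, u, _, hu, conjSum_mul_right a u x z⟩

theorem smul_mem_conjSums_of_mem (hP : IsOrdering P) {w : F} (hw : w ∈ P) {s : A}
    (hs : s ∈ conjSums P a) : w • s ∈ conjSums P a := by
  obtain ⟨k, u, x, hu, rfl⟩ := mem_conjSums.mp hs
  exact mem_conjSums.mpr ⟨k, _, x, fun i => hP.2.1 w hw _ (hu i), (smul_conjSum a w u x).symm⟩

theorem star_eq_of_mem_conjSums (hstar : ∀ c : F, star (algebraMap F A c) = algebraMap F A c)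
    (ha : star a = a) {s : A} (hs : s ∈ conjSums P a) : star s = s := by
  obtain ⟨k, u, x, -, rfl⟩ := mem_conjSums.mp hs
  exact star_conjSum hstar ha u x

theorem exists_nondegenerate_conjSum_eq {k : ℕ} {u : Fin k → F} {x : Fin k → A}
    (hu : ∀ i, u i ∈ P) {i : Fin k} (hi : u i • (star (x i) * a * x i) ≠ 0) :
    ∃ (m : ℕ) (u' : Fin m → F) (x' : Fin m → A), 0 < m ∧ (∀ j, u' j ∈ P ∧ u' j ≠ 0) ∧
      (∀ j, x' j ≠ 0) ∧ conjSum a u' x' = conjSum a u x := by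
  obtain ⟨m, e, he, hsurj, hsum⟩ :=
    Fin.exists_enum_support_sum_eq fun i => u i • (star (x i) * a * x i)
  obtain ⟨j, -⟩ := hsurj i hi
  refine ⟨m, fun j => u (e j), fun j => x (e j), j.pos, fun j => ⟨hu _, fun h => he j ?_⟩,
    fun j h => he j ?_, hsum⟩ <;> simp [h]

end ConjSums

section ExtensionCone

variable {F A : Type*} [Field F] [Ring A] [Algebra F A] [StarRing A] {P : Set F} {PC : Set A}

theorem IsPrepositiveCone.zero_mem (hPC : IsPrepositiveCone F PC) : (0 : A) ∈ PC := by
  obtain ⟨p, hp⟩ := hPC.2.1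
  simpa using hPC.2.2.2.1 0 p hp

theorem IsPrepositiveConeOver.isOrdering (hPC : IsPrepositiveConeOver F P PC) : IsOrdering P :=
  hPC.2 ▸ hPC.1.2.2.2.2.1

theorem IsPrepositiveConeOver.smul_mem (hPC : IsPrepositiveConeOver F P PC) {v : F} (hv : v ∈ P)
    {p : A} (hp : p ∈ PC) : v • p ∈ PC := by
  rw [← hPC.2] at hv
  exact hv p hp

variable {a : A}

theorem mem_add_conjSums_self (hPC : IsPrepositiveCone F PC) (hP : IsOrdering P) :
    a ∈ PC + conjSums P a :=
  ⟨0, hPC.zero_mem, a, by simpa using smul_mem_conjSums (a := a) hP.one_mem, zero_add a⟩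

theorem eq_zero_of_mem_of_neg_mem_add_conjSums (hPC : IsPrepositiveCone F PC)
    (hvanish : ∀ s ∈ conjSums P a, ∀ t ∈ conjSums P a, -(s + t) ∈ PC → t = 0) {c : A}
    (hc : c ∈ PC + conjSums P a) (hnc : -c ∈ PC + conjSums P a) : c = 0 := by
  obtain ⟨p, hp, s, hs, rfl⟩ := hc
  obtain ⟨q, hq, t, ht, hqt⟩ := hnc
  have hneg : -(s + t) = p + q := by grind
  have ht0 : t = 0 := hvanish s hs t ht (hneg ▸ hPC.2.2.1 p hp q hq)
  have hs0 : s = 0 := hvanish t ht s hs (add_comm s t ▸ hneg ▸ hPC.2.2.1 p hp q hq)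
  subst ht0 hs0
  simp only [add_zero] at hqt ⊢
  exact hPC.2.2.2.2.2 p hp (hqt ▸ hq)

theorem eq_zero_of_neg_smul_mem_add_conjSums (hPC : IsPrepositiveCone F PC) (hP : IsOrdering P)
    (ha : a ≠ 0) (hvanish : ∀ s ∈ conjSums P a, ∀ t ∈ conjSums P a, -(s + t) ∈ PC → t = 0)
    {v : F} (hv : v ∈ P) (hnv : ∀ c ∈ PC + conjSums P a, (-v) • c ∈ PC + conjSums P a) :
    v = 0 := by
  obtain ⟨q, hq, s, hs, hqs⟩ := hnv a (mem_add_conjSums_self hPC hP)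
  have hneg : -(s + v • a) = q := by
    rw [neg_smul] at hqs
    grind
  exact (smul_eq_zero.mp (hvanish s hs _ (smul_mem_conjSums hv) (hneg ▸ hq))).resolve_right ha

theorem isPrepositiveCone_add_conjSums (hPC : IsPrepositiveConeOver F P PC)
    (hstar : ∀ c : F, star (algebraMap F A c) = algebraMap F A c) (hsym : star a = a)
    (ha : a ≠ 0) (hvanish : ∀ s ∈ conjSums P a, ∀ t ∈ conjSums P a, -(s + t) ∈ PC → t = 0) :
    IsPrepositiveCone F (PC + (conjSums P a : Set A)) := by
  obtain ⟨hsymPC, hne, haddPC, hconjPC, -, -⟩ := hPC.1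
  have hP := hPC.isOrdering
  have hadd : ∀ c ∈ PC + conjSums P a, ∀ d ∈ PC + conjSums P a, c + d ∈ PC + conjSums P a := by
    rintro _ ⟨p, hp, s, hs, rfl⟩ _ ⟨q, hq, t, ht, rfl⟩
    exact ⟨p + q, haddPC p hp q hq, s + t, add_mem hs ht, (add_add_add_comm p s q t).symm⟩
  refine ⟨?_, hne.add ⟨0, zero_mem _⟩, hadd, ?_, hP.isOrdering_stabilizer hadd ?_ ?_,
    fun c hc hnc => eq_zero_of_mem_of_neg_mem_add_conjSums hPC.1 hvanish hc hnc⟩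
  · rintro _ ⟨p, hp, s, hs, rfl⟩
    rw [star_add, hsymPC p hp, star_eq_of_mem_conjSums hstar hsym hs]
  · rintro z _ ⟨p, hp, s, hs, rfl⟩
    refine ⟨_, hconjPC z p hp, _, star_mul_mul_mem_conjSums hs z, ?_⟩
    rw [mul_add, add_mul]
  · rintro v hv _ ⟨p, hp, s, hs, rfl⟩
    exact ⟨_, hPC.smul_mem hv hp, _, smul_mem_conjSums_of_mem hP hv hs, (smul_add v p s).symm⟩
  · exact fun v hv => eq_zero_of_neg_smul_mem_add_conjSums hPC.1 hP ha hvanish hv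

end ExtensionCone

theorem stmt_6_general {F A : Type*} [Field F] [Ring A] [Algebra F A] [StarRing A]
    (hstar : ∀ c : F, star (algebraMap F A c) = algebraMap F A c)
    (P : Set F) (PC : Set A) (hPC : IsPrepositiveConeOver F P PC)
    (hmax : ∀ QC : Set A, IsPrepositiveCone F QC → PC ⊆ QC → QC = PC)
    (a : A) (hsym : star a = a) (ha : a ∉ PC) :
    ∃ (k : ℕ) (u : Fin k → F) (x : Fin k → A), 0 < k ∧
      (∀ i, u i ∈ P ∧ u i ≠ 0) ∧ (∀ i, x i ≠ 0) ∧
      -(∑ i, u i • (star (x i) * a * x i)) ∈ PC := by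
  by_contra hno
  have hvanish : ∀ s ∈ conjSums P a, ∀ t ∈ conjSums P a, -(s + t) ∈ PC → t = 0 := by
    rintro _ ⟨k, u, x, hu, rfl⟩ _ ⟨l, v, y, hv, rfl⟩ hneg
    by_contra ht
    obtain ⟨i, -, hi⟩ := Finset.exists_ne_zero_of_sum_ne_zero ht
    obtain ⟨m, u', x', hm, hu', hx', hsum⟩ := exists_nondegenerate_conjSum_eq
      (u := Fin.append u v) (x := Fin.append x y) (Fin.addCases (by simpa using hu)
      (by simpa using hv)) (i := Fin.natAdd k i) (by simpa using hi)
    exact hno ⟨m, u', x', hm, hu', hx', by rwa [← conjSum, hsum, conjSum_append]⟩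
  have ha0 : a ≠ 0 := fun h => ha (h ▸ hPC.1.zero_mem)
  have hext := isPrepositiveCone_add_conjSums hPC hstar hsym ha0 hvanish
  have hPCext : PC ⊆ PC + (conjSums P a : Set A) := Set.subset_add_left _ (zero_mem _)
  exact ha (hmax _ hext hPCext ▸ mem_add_conjSums_self hPC.1 hPC.isOrdering)

/-- If `PC` is a positive cone on `(A,σ)` over `P` and `a` is a symmetric element not in
`PC`, then some finite sum `Σ uᵢ σ(xᵢ) a xᵢ` with `uᵢ ∈ P \ {0}` and `xᵢ ≠ 0` lies in `-PC`. -/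
theorem stmt_6 {F A : Type*} [Field F] [Ring A] [Algebra F A] [StarRing A]
    [FiniteDimensional F A] (h2 : (2 : F) ≠ 0)
    (hstar : ∀ c : F, star (algebraMap F A c) = algebraMap F A c)
    (P : Set F) (PC : Set A) (hPC : IsPrepositiveConeOver F P PC)
    (hmax : ∀ QC : Set A, IsPrepositiveCone F QC → PC ⊆ QC → QC = PC)
    (a : A) (hsym : star a = a) (ha : a ∉ PC) :
    ∃ (k : ℕ) (u : Fin k → F) (x : Fin k → A), 0 < k ∧
      (∀ i, u i ∈ P ∧ u i ≠ 0) ∧ (∀ i, x i ≠ 0) ∧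
      -(∑ i, u i • (star (x i) * a * x i)) ∈ PC :=
  stmt_6_general hstar P PC hPC hmax a hsym ha
end

section
/- Let D be an F-division algebra with involution ϑ, ℓ ≥ 1, and let 𝒫 be a prepositive cone on (D,ϑ) over an ordering P of F. For a hermitian matrix B ∈ Sym(M_ℓ(D), ϑ^t) the following are equivalent: (1) ϑ(X)^t B X ∈ 𝒫 for every column vector X ∈ D^ℓ; (2) there is G ∈ GL_ℓ(D) such that ϑ(G)^t B G is diagonal with all diagonal entries in 𝒫; (3) for every G ∈ GL_ℓ(D) such that ϑ(G)^t B G is diagonal, all diagonal entries lie in 𝒫. -/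
/-! For (2) ⇒ (1), write `X = G Y`: the value of `X` becomes `∑ ϑ(Yᵢ) dᵢ Yᵢ` with `dᵢ ∈ 𝒫`, and `𝒫`
is closed under sums and under `p ↦ ϑ(y) p y`. For (1) ⇒ (3), the `i`-th diagonal entry of
`ϑ(G)ᵗ B G` is the value of the `i`-th column of `G`. For (3) ⇒ (2) it remains to see that `B`
admits some congruence diagonalization. Since `2 ≠ 0`, a nonzero hermitian matrix with vanishing
diagonal has `eᵢ + (B i j)⁻¹ eⱼ` of value `2`, so after a congruence some diagonal entry is
nonzero; it clears its row and column by a further congruence, and one inducts on the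
complementary block. -/

open Pointwise Matrix

namespace Matrix

variable {D ι κ : Type*} [DivisionRing D] [StarRing D]
  [Fintype ι] [DecidableEq ι] [Fintype κ] [DecidableEq κ]

def IsCongrDiagonalizable (B : Matrix ι ι D) : Prop :=
  ∃ G : Matrix ι ι D, IsUnit G ∧ (Gᴴ * B * G).IsDiag

omit [DecidableEq ι] in
theorem conjTranspose_mul_mul_mul (B G H : Matrix ι ι D) :
    (G * H)ᴴ * B * (G * H) = Hᴴ * (Gᴴ * B * G) * H := by
  simp only [conjTranspose_mul, Matrix.mul_assoc]

omit [DecidableEq ι] in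
theorem conjTranspose_mul_mul_apply (B G : Matrix ι ι D) (i j : ι) :
    (Gᴴ * B * G) i j = star (G.col i) ⬝ᵥ B *ᵥ G.col j := by
  simp only [mul_apply, dotProduct, mulVec, col_apply, conjTranspose_apply, Pi.star_apply,
    Finset.sum_mul, Finset.mul_sum, mul_assoc]
  exact Finset.sum_comm

omit [DecidableEq ι] in
theorem star_dotProduct_mulVec_eq_sum (B : Matrix ι ι D) (X : ι → D) :
    star X ⬝ᵥ B *ᵥ X = ∑ i, ∑ j, star (X i) * B i j * X j := by
  simp [dotProduct, mulVec, Finset.mul_sum, mul_assoc]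

omit [DecidableEq ι] in
theorem star_mulVec_dotProduct_mulVec_mulVec (B G : Matrix ι ι D) (Y : ι → D) :
    star (G *ᵥ Y) ⬝ᵥ B *ᵥ (G *ᵥ Y) = star Y ⬝ᵥ (Gᴴ * B * G) *ᵥ Y := by
  rw [eq_comm, Matrix.mul_assoc, ← mulVec_mulVec, dotProduct_mulVec, ← star_mulVec,
    ← mulVec_mulVec]

omit [DecidableEq ι] in
theorem IsDiag.star_dotProduct_mulVec {M : Matrix ι ι D} (hM : M.IsDiag) (Y : ι → D) :
    star Y ⬝ᵥ M *ᵥ Y = ∑ i, star (Y i) * M i i * Y i := by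
  rw [star_dotProduct_mulVec_eq_sum]
  refine Finset.sum_congr rfl fun i _ => Finset.sum_eq_single i (fun j _ hji => ?_) (by simp)
  rw [hM hji.symm, mul_zero, zero_mul]

theorem IsCongrDiagonalizable.of_conjTranspose_mul_mul {B G : Matrix ι ι D} (hG : IsUnit G)
    (h : IsCongrDiagonalizable (Gᴴ * B * G)) : IsCongrDiagonalizable B := by
  obtain ⟨H, hH, hdiag⟩ := h
  exact ⟨G * H, hG.mul hH, by rwa [conjTranspose_mul_mul_mul]⟩

theorem isCongrDiagonalizable_of_subsingleton [Subsingleton ι] (B : Matrix ι ι D) :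
    IsCongrDiagonalizable B :=
  ⟨1, isUnit_one, isDiag_of_subsingleton _⟩

theorem IsCongrDiagonalizable.of_reindex {B : Matrix ι ι D} (e : ι ≃ κ)
    (h : IsCongrDiagonalizable (reindex e e B)) : IsCongrDiagonalizable B := by
  obtain ⟨G, hG, hdiag⟩ := h
  refine ⟨reindex e.symm e.symm G, hG.map (reindexRingEquiv D e.symm), ?_⟩
  have : (reindex e.symm e.symm G)ᴴ * B * reindex e.symm e.symm G =
      reindex e.symm e.symm (Gᴴ * reindex e e B * G) := by
    rw [conjTranspose_reindex, ← coe_reindexRingEquiv, ← coe_reindexRingEquiv, map_mul, map_mul]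
    simp
  rw [this]
  exact hdiag.submatrix e.injective

omit [StarRing D] in
theorem isUnit_fromBlocks_zero {G : Matrix ι ι D} {H : Matrix κ κ D} (hG : IsUnit G)
    (hH : IsUnit H) : IsUnit (fromBlocks G 0 0 H) := by
  obtain ⟨u, rfl⟩ := hG
  obtain ⟨v, rfl⟩ := hH
  refine isUnit_iff_exists.mpr ⟨fromBlocks ↑u⁻¹ 0 0 ↑v⁻¹, ?_, ?_⟩ <;> simp [fromBlocks_multiply]

theorem IsCongrDiagonalizable.fromBlocks {A : Matrix ι ι D} {C : Matrix κ κ D}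
    (hA : IsCongrDiagonalizable A) (hC : IsCongrDiagonalizable C) :
    IsCongrDiagonalizable (fromBlocks A 0 0 C) := by
  obtain ⟨G, hG, hGd⟩ := hA
  obtain ⟨H, hH, hHd⟩ := hC
  refine ⟨Matrix.fromBlocks G 0 0 H, isUnit_fromBlocks_zero hG hH, ?_⟩
  simpa [fromBlocks_conjTranspose, fromBlocks_multiply] using hGd.fromBlocks hHd

omit [StarRing D] in
theorem isUnit_one_add_vecMulVec {u v : ι → D} (h : v ⬝ᵥ u = 0) : IsUnit (1 + vecMulVec u v) :=
  IsNilpotent.isUnit_one_add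
    ⟨2, by rw [pow_two, vecMulVec_mul_vecMulVec, h, zero_smul, vecMulVec_zero]⟩

omit [StarRing D] [Fintype ι] in
theorem col_one_add_vecMulVec_single (i j : ι) (r : ι → D) :
    (1 + vecMulVec (Pi.single i 1) r).col j = Pi.single j 1 + Pi.single i (r j) := by
  ext k
  by_cases hk : k = i <;> simp [vecMulVec_apply, one_apply, Pi.single_apply, hk, eq_comm]

theorem exists_isUnit_conjTranspose_mul_mul_apply_self_ne_zero (h2 : (2 : D) ≠ 0)
    {B : Matrix ι ι D} (hB : B.IsHermitian) (h0 : B ≠ 0) :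
    ∃ G : Matrix ι ι D, IsUnit G ∧ ∃ i, (Gᴴ * B * G) i i ≠ 0 := by
  by_cases hdiag : ∃ i, B i i ≠ 0
  · obtain ⟨i, hi⟩ := hdiag
    exact ⟨1, isUnit_one, i, by simpa using hi⟩
  push Not at hdiag
  obtain ⟨i, j, hij⟩ : ∃ i j, B i j ≠ 0 := by
    by_contra! h
    exact h0 (ext h)
  have hji : j ≠ i := by
    rintro rfl
    exact hij (hdiag j)
  refine ⟨1 + vecMulVec (Pi.single j 1) (Pi.single i (B i j)⁻¹),
    isUnit_one_add_vecMulVec (by simp [hji]), i, ?_⟩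
  rw [conjTranspose_mul_mul_apply, col_one_add_vecMulVec_single]
  simpa [hdiag, dotProduct_add, mulVec_add, ← hB.apply j i, hij, one_add_one_eq_two] using h2

theorem exists_isUnit_conjTranspose_mul_mul_apply_eq_zero {B : Matrix ι ι D} {i : ι}
    (hi : B i i ≠ 0) : ∃ G : Matrix ι ι D, IsUnit G ∧ ∀ j, j ≠ i → (Gᴴ * B * G) i j = 0 := by
  set r := Function.update (fun j => -((B i i)⁻¹ * B i j)) i 0
  refine ⟨1 + vecMulVec (Pi.single i 1) r, isUnit_one_add_vecMulVec (by simp [r]), ?_⟩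
  intro j hj
  rw [conjTranspose_mul_mul_apply, col_one_add_vecMulVec_single, col_one_add_vecMulVec_single]
  simp [r, hj, dotProduct_add, mulVec_add, hi]

omit [Fintype ι] in
theorem reindex_sumCompl_symm_eq_fromBlocks {B : Matrix ι ι D} (hB : B.IsHermitian) {i : ι}
    (hrow : ∀ j, j ≠ i → B i j = 0) :
    reindex (Equiv.sumCompl (· = i)).symm (Equiv.sumCompl (· = i)).symm B =
      Matrix.fromBlocks (B.submatrix (↑) (↑)) 0 0 (B.submatrix (↑) (↑)) := by
  rw [← fromBlocks_toBlocks (reindex _ _ B)]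
  congr
  · ext ⟨a, rfl⟩ ⟨b, hb⟩
    exact hrow b hb
  · ext ⟨b, hb⟩ ⟨a, rfl⟩
    rw [toBlocks₂₁, of_apply, reindex_apply, submatrix_apply, ← hB.apply]
    simp [hrow b hb]

theorem IsHermitian.isCongrDiagonalizable (h2 : (2 : D) ≠ 0) {B : Matrix ι ι D}
    (hB : B.IsHermitian) : B.IsCongrDiagonalizable := by
  suffices ∀ (κ : Type _) [Finite κ] [Fintype κ] [DecidableEq κ] (B : Matrix κ κ D),
      B.IsHermitian → B.IsCongrDiagonalizable from this ι B hB
  intro κ _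
  induction κ using Finite.induction_subsingleton_or_nontrivial with
  | hbase κ => exact fun B _ => isCongrDiagonalizable_of_subsingleton B
  | hstep κ ih =>
    intro _ _ B hB
    by_cases h0 : B = 0
    · exact ⟨1, isUnit_one, by simp [h0, isDiag_zero]⟩
    obtain ⟨G, hG, i, hi⟩ := exists_isUnit_conjTranspose_mul_mul_apply_self_ne_zero h2 hB h0
    obtain ⟨H, hH, hrow⟩ := exists_isUnit_conjTranspose_mul_mul_apply_eq_zero hi
    have hB' := isHermitian_conjTranspose_mul_mul H (isHermitian_conjTranspose_mul_mul G hB)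
    refine (IsCongrDiagonalizable.of_conjTranspose_mul_mul hG
      (.of_conjTranspose_mul_mul hH (.of_reindex (Equiv.sumCompl (· = i)).symm ?_)))
    rw [reindex_sumCompl_symm_eq_fromBlocks hB' hrow]
    have hcard : Nat.card {j // ¬j = i} < Nat.card κ := by
      simpa only [Nat.card_eq_fintype_card] using Fintype.card_subtype_lt (x := i) (by simp)
    exact .fromBlocks (isCongrDiagonalizable_of_subsingleton _)
      (ih _ hcard _ (hB'.submatrix _))

end Matrix

namespace IsPrepositiveCone

variable {F A : Type*} [Field F] [Ring A] [Algebra F A] [StarRing A] {PC : Set A}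

theorem zero_mem_s7 (hPC : IsPrepositiveCone F PC) : (0 : A) ∈ PC := by
  obtain ⟨p, hp⟩ := hPC.2.1
  simpa using hPC.2.2.2.1 0 p hp

theorem sum_star_mul_mul_mem (hPC : IsPrepositiveCone F PC) {ι : Type*} (s : Finset ι)
    (x p : ι → A) (hp : ∀ i ∈ s, p i ∈ PC) : ∑ i ∈ s, star (x i) * p i * x i ∈ PC :=
  Finset.sum_induction _ (· ∈ PC) (fun a b ha hb => hPC.2.2.1 a ha b hb) hPC.zero_mem_s7
    fun i hi => hPC.2.2.2.1 (x i) (p i) (hp i hi)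

end IsPrepositiveCone

theorem stmt_7_general {F D : Type*} [Field F] [DivisionRing D] [Algebra F D] [StarRing D]
    (h2 : (2 : F) ≠ 0)
    (n : ℕ)
    (P : Set F) (PC : Set D) (hPC : IsPrepositiveConeOver F P PC)
    (B : Matrix (Fin n) (Fin n) D) (hB : Bᴴ = B) :
    List.TFAE
      [ ∀ X : Fin n → D, (∑ i, ∑ j, star (X i) * B i j * X j) ∈ PC,
        ∃ G : Matrix (Fin n) (Fin n) D, IsUnit G ∧ (Gᴴ * B * G).IsDiag ∧
          ∀ i, (Gᴴ * B * G) i i ∈ PC,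
        ∀ G : Matrix (Fin n) (Fin n) D, IsUnit G → (Gᴴ * B * G).IsDiag →
          ∀ i, (Gᴴ * B * G) i i ∈ PC ] := by
  have h2D : (2 : D) ≠ 0 := by
    rw [← map_ofNat (algebraMap F D) 2]
    exact (map_ne_zero _).mpr h2
  tfae_have 1 → 3 := fun h1 G _ _ i => by
    rw [conjTranspose_mul_mul_apply, star_dotProduct_mulVec_eq_sum]
    exact h1 _
  tfae_have 3 → 2 := fun h3 =>
    let ⟨G, hG, hdiag⟩ := IsHermitian.isCongrDiagonalizable h2D hB
    ⟨G, hG, hdiag, h3 G hG hdiag⟩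
  tfae_have 2 → 1 := by
    rintro ⟨G, ⟨u, rfl⟩, hdiag, hPCdiag⟩ X
    have hX : X = u.val *ᵥ (u.inv *ᵥ X) := by rw [mulVec_mulVec, u.val_inv, one_mulVec]
    rw [← star_dotProduct_mulVec_eq_sum, hX, star_mulVec_dotProduct_mulVec_mulVec,
      hdiag.star_dotProduct_mulVec]
    exact hPC.1.sum_star_mul_mul_mem _ _ _ fun i _ => hPCdiag i
  tfae_finish

/-- Characterization of `PSD` matrices with respect to a prepositive cone on a division
algebra with involution: for a hermitian matrix `B` over `(M_ℓ(D), ϑ^t)`, the conditions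
(1) `ϑ(X)^t B X ∈ PC` for all column vectors `X`, (2) some congruence diagonalization of
`B` has all diagonal entries in `PC`, (3) every congruence diagonalization of `B` has all
diagonal entries in `PC`, are equivalent. -/
theorem stmt_7 {F D : Type*} [Field F] [DivisionRing D] [Algebra F D] [StarRing D]
    [FiniteDimensional F D] (h2 : (2 : F) ≠ 0)
    (hstar : ∀ c : F, star (algebraMap F D c) = algebraMap F D c)
    (n : ℕ) (hn : 0 < n)
    (P : Set F) (PC : Set D) (hPC : IsPrepositiveConeOver F P PC)
    (B : Matrix (Fin n) (Fin n) D) (hB : Bᴴ = B) :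
    List.TFAE
      [ ∀ X : Fin n → D, (∑ i, ∑ j, star (X i) * B i j * X j) ∈ PC,
        ∃ G : Matrix (Fin n) (Fin n) D, IsUnit G ∧ (Gᴴ * B * G).IsDiag ∧
          ∀ i, (Gᴴ * B * G) i i ∈ PC,
        ∀ G : Matrix (Fin n) (Fin n) D, IsUnit G → (Gᴴ * B * G).IsDiag →
          ∀ i, (Gᴴ * B * G) i i ∈ PC ] :=
  stmt_7_general h2 n P PC hPC B hB
end

section
/- Let F be a field of characteristic ≠ 2 and P an ordering of F. Let 𝒫 be a prepositive cone on (M_ℓ(F), t) over P, where t is the transpose involution. Then there exists ε ∈ {-1,1} such that every matrix C ∈ 𝒫 is congruent to a diagonal matrix whose entries all lie in εP; in other words, 𝒫 consists entirely of positive semidefinite matrices or entirely of negative semidefinite matrices with respect to P. -/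
/-!
Compressing a cone element `D` by the matrix unit `E_ik` gives `D_ii • E_kk`, so the diagonal
entries of all elements of `𝒫` occur as coefficients of the single matrix `E_kk` in `𝒫`. If
`a • E_kk` and `b • E_kk` lie in `𝒫` with `a ∈ P` and `b ∈ -P`, scaling one by the other puts both
`ab • E_kk` and `-(ab • E_kk)` in `𝒫`, so `ab = 0` by properness: all these coefficients share
one sign `ε`. Diagonalizing `C ∈ 𝒫` by congruence (characteristic `≠ 2`) yields a diagonal
element of `𝒫`, whose entries therefore lie in `εP`.
-/

open Matrix

def IsMatPrepositiveConeOver {F : Type*} [Field F] {n : ℕ} (P : Set F)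
    (PC : Set (Matrix (Fin n) (Fin n) F)) : Prop :=
  (∀ M ∈ PC, Mᵀ = M) ∧ PC.Nonempty ∧ (∀ a ∈ PC, ∀ b ∈ PC, a + b ∈ PC) ∧
  (∀ X : Matrix (Fin n) (Fin n) F, ∀ M ∈ PC, Xᵀ * M * X ∈ PC) ∧
  {u : F | ∀ M ∈ PC, u • M ∈ PC} = P ∧
  (∀ M ∈ PC, -M ∈ PC → M = 0)

namespace Matrix

variable {n : Type*} [Fintype n] [DecidableEq n]

theorem transpose_single_mul_mul_single {R : Type*} [CommSemiring R] (D : Matrix n n R)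
    (i k : n) : (single i k (1 : R))ᵀ * D * single i k 1 = D i i • single k k 1 := by
  ext a b
  simp only [mul_apply, single, transpose_apply, smul_apply, of_apply, ite_and, smul_eq_mul]
  by_cases ha : k = a <;> by_cases hb : k = b <;> simp [ha, hb, mul_comm]

theorem IsSymm.exists_isUnit_isDiag_transpose_mul_mul {F : Type*} [Field F] (h2 : (2 : F) ≠ 0)
    {M : Matrix n n F} (hM : M.IsSymm) :
    ∃ G : Matrix n n F, IsUnit G ∧ (Gᵀ * M * G).IsDiag := by
  have : Invertible (2 : F) := invertibleOfNonzero h2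
  obtain ⟨v, hv⟩ := LinearMap.BilinForm.exists_orthogonal_basis
    (LinearMap.BilinForm.isSymm_iff.mp (isSymm_toBilin'_iff_isSymm.mpr hM))
  let e : Fin (Module.finrank F (n → F)) ≃ n :=
    (Fintype.equivFinOfCardEq (Module.finrank_fintype_fun_eq_card F).symm).symm
  let b := Pi.basisFun F n
  let G := b.toMatrix (v.reindex e)
  have := b.invertibleToMatrix (v.reindex e)
  refine ⟨G, isUnit_of_invertible G, fun i j hij => ?_⟩
  have hG : Gᵀ * M * G = LinearMap.BilinForm.toMatrix (v.reindex e) M.toBilin' := by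
    rw [← LinearMap.BilinForm.toMatrix_mul_basis_toMatrix b, LinearMap.BilinForm.toMatrix_basisFun,
      LinearMap.BilinForm.toMatrix'_toBilin']
  change (Gᵀ * M * G) i j = 0
  rw [hG, LinearMap.BilinForm.toMatrix_apply, Module.Basis.reindex_apply,
    Module.Basis.reindex_apply]
  exact hv (e.symm.injective.ne hij)

end Matrix

namespace IsMatPrepositiveConeOver

variable {F : Type*} [Field F] {P : Set F} {n : ℕ} {PC : Set (Matrix (Fin n) (Fin n) F)}

theorem smul_mem (hPC : IsMatPrepositiveConeOver P PC) {u : F} (hu : u ∈ P)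
    {M : Matrix (Fin n) (Fin n) F} (hM : M ∈ PC) : u • M ∈ PC := by
  rw [← hPC.2.2.2.2.1] at hu
  exact hu M hM

theorem diag_smul_single_mem (hPC : IsMatPrepositiveConeOver P PC)
    {D : Matrix (Fin n) (Fin n) F} (hD : D ∈ PC) (i k : Fin n) :
    D i i • single k k (1 : F) ∈ PC := by
  simpa only [transpose_single_mul_mul_single] using hPC.2.2.2.1 (single i k 1) D hD

theorem mul_eq_zero_of_smul_single_mem (hPC : IsMatPrepositiveConeOver P PC) {a b : F}
    {k : Fin n} (ha : a • single k k (1 : F) ∈ PC) (hb : b • single k k (1 : F) ∈ PC)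
    (haP : a ∈ P) (hbP : -b ∈ P) : a * b = 0 := by
  have hab : (a * b) • single k k (1 : F) ∈ PC := by
    simpa only [smul_smul] using hPC.smul_mem haP hb
  have hba : -((a * b) • single k k (1 : F)) ∈ PC := by
    simpa only [smul_smul, neg_mul, mul_comm b, neg_smul] using hPC.smul_mem hbP ha
  simpa using congrFun (congrFun (hPC.2.2.2.2.2 _ hab hba) k) k

theorem exists_sign_mul_diag_mem (hPC : IsMatPrepositiveConeOver P PC)
    (htot : ∀ x : F, x ∈ P ∨ -x ∈ P) :
    ∃ ε : F, (ε = 1 ∨ ε = -1) ∧ ∀ D ∈ PC, ∀ i, ε * D i i ∈ P := by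
  by_cases hpos : ∀ D ∈ PC, ∀ i, D i i ∈ P
  · exact ⟨1, Or.inl rfl, by simpa only [one_mul] using hpos⟩
  push Not at hpos
  obtain ⟨D₀, hD₀, i₀, hi₀⟩ := hpos
  have h0 : (0 : F) ∈ P := by simpa using htot 0
  have hd₀ : D₀ i₀ i₀ ≠ 0 := fun h => hi₀ (h ▸ h0)
  refine ⟨-1, Or.inr rfl, fun D hD i => ?_⟩
  rw [neg_one_mul]
  by_contra hi
  have hd : D i i = 0 :=
    (mul_eq_zero.mp (hPC.mul_eq_zero_of_smul_single_mem (hPC.diag_smul_single_mem hD i i₀)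
      (hPC.diag_smul_single_mem hD₀ i₀ i₀) ((htot _).resolve_right hi)
      ((htot _).resolve_left hi₀))).resolve_right hd₀
  exact hi (by simpa [hd] using h0)

end IsMatPrepositiveConeOver

/-- Every prepositive cone on `(M_ℓ(F), t)` over `P` consists entirely of matrices
congruent to diagonal matrices with all entries in `εP` for a single sign `ε ∈ {1, -1}`;
i.e. it consists entirely of positive semidefinite or entirely of negative semidefinite
matrices with respect to `P`. -/
theorem stmt_14 {F : Type*} [Field F] (h2 : (2 : F) ≠ 0)
    (P : Set F) (hP : IsOrdering P) (n : ℕ)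
    (PC : Set (Matrix (Fin n) (Fin n) F)) (hPC : IsMatPrepositiveConeOver P PC) :
    ∃ ε : F, (ε = 1 ∨ ε = -1) ∧
      ∀ C ∈ PC, ∃ G : Matrix (Fin n) (Fin n) F, IsUnit G ∧
        (Gᵀ * C * G).IsDiag ∧ ∀ i, ε * (Gᵀ * C * G) i i ∈ P := by
  obtain ⟨ε, hε, hdiag⟩ := hPC.exists_sign_mul_diag_mem hP.2.2.1
  refine ⟨ε, hε, fun C hC => ?_⟩
  obtain ⟨G, hG, hGCG⟩ := IsSymm.exists_isUnit_isDiag_transpose_mul_mul h2 (hPC.1 C hC)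
  exact ⟨G, hG, hGCG, hdiag _ (hPC.2.2.2.1 G C hC)⟩
end

section
/- Let E be a finite-dimensional F-division algebra with involution τ, and let L be a subfield of Sym(E,τ) containing F and maximal for inclusion among such subfields. Then either L is a maximal subfield of E, or there exists u ∈ Skew(E,τ), u ≠ 0, with u² ∈ L such that L(u) is a maximal subfield of E. -/
/-- A maximal subfield of a division algebra `E`, modelled as a subalgebra that is
commutative and maximal among commutative subalgebras. -/
def IsMaximalSubfield {F E : Type*} [Field F] [DivisionRing E] [Algebra F E]
    (K : Subalgebra F E) : Prop :=
  (∀ x ∈ K, ∀ y ∈ K, x * y = y * x) ∧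
  ∀ K' : Subalgebra F E, (∀ x ∈ K', ∀ y ∈ K', x * y = y * x) → K ≤ K' → K' = K

/-!
Let `C` be the centralizer of `L`. It is stable under the involution, and by maximality of `L`
its symmetric elements are exactly `L`; in particular `L` is commutative and closed under
inverses. If `C = L`, then `L` is a maximal subfield. Otherwise pick `c ∈ C \ L` and put
`u = c - τ(c) ≠ 0`, a skew element of `C`, so `u² ∈ L`. An element `x` of a commutative
subalgebra containing `L(u)` lies in `C` and commutes with `u`; then `x + τ(x)` and
`(x - τ(x)) u` are symmetric elements of `C`, hence lie in `L`, which puts `2x` in `L(u)`.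
-/

open Algebra Subalgebra

section Commutativity

variable {R A : Type*} [CommSemiring R] [Semiring A] [Algebra R A]

theorem mul_comm_of_mem_adjoin {S : Set A} (hS : ∀ a ∈ S, ∀ b ∈ S, a * b = b * a) :
    ∀ x ∈ adjoin R S, ∀ y ∈ adjoin R S, x * y = y * x :=
  have := isMulCommutative_adjoin R hS
  fun _ hx _ hy => setLike_mul_comm hx hy

theorem mul_comm_insert_of_mem_centralizer {S : Set A} {u : A}
    (hS : ∀ a ∈ S, ∀ b ∈ S, a * b = b * a) (hu : u ∈ S.centralizer) :
    ∀ a ∈ insert u S, ∀ b ∈ insert u S, a * b = b * a := by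
  rintro a (rfl | ha) b (rfl | hb)
  · rfl
  · exact (hu b hb).symm
  · exact hu a ha
  · exact hS a ha b hb

theorem mul_comm_of_forall_star_eq_self [StarRing A] {L : Subalgebra R A}
    (hL : ∀ x ∈ L, star x = x) : ∀ x ∈ L, ∀ y ∈ L, x * y = y * x := by
  intro x hx y hy
  simpa only [star_mul, hL x hx, hL y hy] using (hL (x * y) (mul_mem hx hy)).symm

theorem star_eq_self_of_mem_adjoin [StarRing A]
    (hstar : ∀ c : R, star (algebraMap R A c) = algebraMap R A c) {S : Set A}
    (hcomm : ∀ a ∈ S, ∀ b ∈ S, a * b = b * a) (hS : ∀ a ∈ S, star a = a) {x : A}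
    (hx : x ∈ adjoin R S) : star x = x := by
  induction hx using adjoin_induction with
  | mem z hz => exact hS z hz
  | algebraMap r => exact hstar r
  | add x y _ _ ihx ihy => rw [star_add, ihx, ihy]
  | mul x y hx hy ihx ihy => rw [star_mul, ihx, ihy, mul_comm_of_mem_adjoin hcomm y hy x hx]

end Commutativity

theorem isMaximalSubfield_of_centralizer_le {F E : Type*} [Field F] [DivisionRing E]
    [Algebra F E] {L : Subalgebra F E} (hL : ∀ x ∈ L, ∀ y ∈ L, x * y = y * x)
    (hC : centralizer F (L : Set E) ≤ L) : IsMaximalSubfield L :=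
  ⟨hL, fun _ hK hLK => le_antisymm (fun x hx => hC fun g hg => hK g (hLK hg) x hx) hLK⟩

section MaximalSymmetric

variable {F E : Type*} [Field F] [DivisionRing E] [Algebra F E] [StarRing E]
  {L : Subalgebra F E} (hLsym : ∀ x ∈ L, star x = x)
include hLsym

theorem star_mem_centralizer_of_forall_star_eq_self {c : E}
    (hc : c ∈ centralizer F (L : Set E)) : star c ∈ centralizer F (L : Set E) := by
  intro g hg
  simpa only [star_mul, hLsym g hg] using congrArg star (hc g hg).symm

variable (hstar : ∀ c : F, star (algebraMap F E c) = algebraMap F E c)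
  (hLmax : ∀ L' : Subalgebra F E, (∀ x ∈ L', star x = x) → L ≤ L' → L' = L)
include hstar hLmax

theorem mem_of_mem_centralizer_of_star_eq_self {c : E} (hc : c ∈ centralizer F (L : Set E))
    (hcs : star c = c) : c ∈ L := by
  have hcomm := mul_comm_insert_of_mem_centralizer (mul_comm_of_forall_star_eq_self hLsym) hc
  have hsym : ∀ x ∈ adjoin F (insert c (L : Set E)), star x = x := fun _ hx =>
    star_eq_self_of_mem_adjoin hstar hcomm (by rintro a (rfl | ha); exacts [hcs, hLsym a ha]) hx
  have hL := hLmax _ hsym fun z hz => subset_adjoin (Set.mem_insert_of_mem c hz)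
  exact hL ▸ subset_adjoin (Set.mem_insert c _)

theorem inv_mem_of_forall_star_eq_self {x : E} (hx : x ∈ L) : x⁻¹ ∈ L := by
  refine mem_of_mem_centralizer_of_star_eq_self hLsym hstar hLmax ?_ ?_
  · exact Set.inv_mem_centralizer₀ fun g hg => mul_comm_of_forall_star_eq_self hLsym g hg x hx
  · rw [star_inv₀, hLsym x hx]

theorem exists_skew_mem_centralizer (hC : ¬centralizer F (L : Set E) ≤ L) :
    ∃ u ∈ centralizer F (L : Set E), u ≠ 0 ∧ star u = -u := by
  obtain ⟨c, hcC, hcL⟩ := SetLike.not_le_iff_exists.mp hC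
  refine ⟨c - star c, sub_mem hcC (star_mem_centralizer_of_forall_star_eq_self hLsym hcC),
    fun h => hcL ?_, by rw [star_sub, star_star, neg_sub]⟩
  exact mem_of_mem_centralizer_of_star_eq_self hLsym hstar hLmax hcC (sub_eq_zero.mp h).symm

theorem mul_self_mem_of_skew_mem_centralizer {u : E} (huC : u ∈ centralizer F (L : Set E))
    (hu : star u = -u) : u * u ∈ L :=
  mem_of_mem_centralizer_of_star_eq_self hLsym hstar hLmax (mul_mem huC huC)
    (by rw [star_mul, hu, neg_mul_neg])

theorem mem_adjoin_of_commute_skew (h2 : (2 : F) ≠ 0) {u x : E}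
    (huC : u ∈ centralizer F (L : Set E)) (hu0 : u ≠ 0) (hu : star u = -u)
    (hxC : x ∈ centralizer F (L : Set E)) (hux : Commute u x) :
    x ∈ adjoin F (insert u (L : Set E)) := by
  have hsym : ∀ {c}, c ∈ centralizer F (L : Set E) → star c = c → c ∈ L :=
    mem_of_mem_centralizer_of_star_eq_self hLsym hstar hLmax
  set M := adjoin F (insert u (L : Set E))
  have hLM : L ≤ M := fun z hz => subset_adjoin (Set.mem_insert_of_mem u hz)
  have hxsC := star_mem_centralizer_of_forall_star_eq_self hLsym hxC
  have hsymL : x + star x ∈ L := hsym (add_mem hxC hxsC) (by rw [star_add, star_star, add_comm])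
  set k := x - star x
  have hks : star k = -k := by rw [star_sub, star_star, neg_sub]
  have hku : Commute k u := by
    have := hux.star_star
    rw [hu, Commute.neg_left_iff] at this
    exact (hux.sub_right this).symm
  have hkuL : k * u ∈ L := hsym (mul_mem (sub_mem hxC hxsC) huC) (by
    rw [star_mul, hu, hks, neg_mul_neg, hku.eq])
  have hkM : k ∈ M := by
    have hk : k = k * u * u * (u * u)⁻¹ := by
      rw [mul_assoc k, mul_assoc, mul_inv_cancel₀ (mul_self_ne_zero.mpr hu0), mul_one]
    rw [hk]
    exact mul_mem (mul_mem (hLM hkuL) (subset_adjoin (Set.mem_insert u _)))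
      (hLM (inv_mem_of_forall_star_eq_self hLsym hstar hLmax
        (mul_self_mem_of_skew_mem_centralizer hLsym hstar hLmax huC hu)))
  have h2x : (2 : F) • x ∈ M := by
    rw [two_smul, ← add_add_sub_cancel x x (star x)]
    exact add_mem (hLM hsymL) hkM
  simpa only [inv_smul_smul₀ h2] using M.smul_mem h2x (2 : F)⁻¹

theorem isMaximalSubfield_adjoin_skew (h2 : (2 : F) ≠ 0) {u : E}
    (huC : u ∈ centralizer F (L : Set E)) (hu0 : u ≠ 0) (hu : star u = -u) :
    IsMaximalSubfield (adjoin F (insert u (L : Set E))) := by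
  have hLM : L ≤ adjoin F (insert u (L : Set E)) :=
    fun z hz => subset_adjoin (Set.mem_insert_of_mem u hz)
  refine ⟨mul_comm_of_mem_adjoin
      (mul_comm_insert_of_mem_centralizer (mul_comm_of_forall_star_eq_self hLsym) huC),
    fun K hK hMK => le_antisymm (fun x hx => ?_) hMK⟩
  exact mem_adjoin_of_commute_skew hLsym hstar hLmax h2 huC hu0 hu
    (fun g hg => hK g (hMK (hLM hg)) x hx) (hK u (hMK (subset_adjoin (Set.mem_insert u _))) x hx)

end MaximalSymmetric

theorem stmt_15_general {F E : Type*} [Field F] [DivisionRing E] [Algebra F E] [StarRing E]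
    (h2 : (2 : F) ≠ 0)
    (hstar : ∀ c : F, star (algebraMap F E c) = algebraMap F E c)
    (L : Subalgebra F E)
    (hLsym : ∀ x ∈ L, star x = x)
    (hLmax : ∀ L' : Subalgebra F E, (∀ x ∈ L', star x = x) → L ≤ L' → L' = L) :
    IsMaximalSubfield L ∨
      ∃ u : E, u ≠ 0 ∧ star u = -u ∧ u * u ∈ L ∧
        IsMaximalSubfield (Algebra.adjoin F (insert u (L : Set E))) := by
  by_cases hC : centralizer F (L : Set E) ≤ L
  · exact .inl (isMaximalSubfield_of_centralizer_le (mul_comm_of_forall_star_eq_self hLsym) hC)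
  · obtain ⟨u, huC, hu0, hu⟩ := exists_skew_mem_centralizer hLsym hstar hLmax hC
    exact .inr ⟨u, hu0, hu, mul_self_mem_of_skew_mem_centralizer hLsym hstar hLmax huC hu,
      isMaximalSubfield_adjoin_skew hLsym hstar hLmax h2 huC hu0 hu⟩

/-- Let `(E, τ)` be a finite-dimensional `F`-division algebra with involution (with `τ`
fixing `F`) and `L` a subfield of `Sym(E, τ)` containing `F`, maximal for inclusion among
such subfields. Then either `L` is a maximal subfield of `E`, or there exists a nonzero
skew-symmetric `u` with `u² ∈ L` such that `L(u)` is a maximal subfield of `E`. -/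
theorem stmt_15 {F E : Type*} [Field F] [DivisionRing E] [Algebra F E] [StarRing E]
    [FiniteDimensional F E] (h2 : (2 : F) ≠ 0)
    (hstar : ∀ c : F, star (algebraMap F E c) = algebraMap F E c)
    (L : Subalgebra F E)
    (hLsym : ∀ x ∈ L, star x = x)
    (hLmax : ∀ L' : Subalgebra F E, (∀ x ∈ L', star x = x) → L ≤ L' → L' = L) :
    IsMaximalSubfield L ∨
      ∃ u : E, u ≠ 0 ∧ star u = -u ∧ u * u ∈ L ∧
        IsMaximalSubfield (Algebra.adjoin F (insert u (L : Set E))) :=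
  stmt_15_general h2 hstar L hLsym hLmax
end

section
/- Let F be a field of characteristic ≠ 2 and P an ordering of F. Suppose 𝒫 ⊆ Sym(A,σ) satisfies: 𝒫 ≠ ∅, 𝒫 + 𝒫 ⊆ 𝒫, σ(x)𝒫x ⊆ 𝒫 for all x ∈ A, and {u ∈ F | u𝒫 ⊆ 𝒫} is an ordering of F, but 𝒫 ∩ -𝒫 ≠ {0}. Then 𝒫 = Sym(A,σ). -/
/-!
Take `a ≠ 0` with `a, -a ∈ PC`. Every congruent image `σ(x) a x` and its negative lie in `PC`,
so the additive group `G` generated by these images lies in `PC`. Polarising,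
`σ(u) a v + σ(v) a u ∈ G`, so `m ↦ m + σ(m)` maps the two-sided ideal generated by `a` into `G`.
By simplicity that ideal is `A`, so `2s = s + σ(s) ∈ PC` for every symmetric `s`; finally
`1/2 = 2 (1/2)²` lies in every ordering, so it scales `PC` into itself, and `s ∈ PC`.
-/

open Pointwise

namespace IsOrdering

variable {F : Type*} [Field F] {P : Set F}

theorem mul_self_mem (hP : IsOrdering P) (x : F) : x * x ∈ P := by
  rcases hP.2.2.1 x with hx | hx
  · exact hP.2.1 x hx x hx
  · simpa using hP.2.1 _ hx _ hx

theorem inv_mem (hP : IsOrdering P) {x : F} (hx : x ∈ P) : x⁻¹ ∈ P := by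
  have hsq : x * (x⁻¹ * x⁻¹) = x⁻¹ := by
    rcases eq_or_ne x 0 with rfl | hx0
    · simp
    · rw [← mul_assoc, mul_inv_cancel₀ hx0, one_mul]
  exact hsq ▸ hP.2.1 x hx _ (hP.mul_self_mem x⁻¹)

theorem inv_two_mem (hP : IsOrdering P) : (2 : F)⁻¹ ∈ P := by
  have h1 : (1 : F) ∈ P := by simpa using hP.mul_self_mem 1
  exact hP.inv_mem (one_add_one_eq_two (R := F) ▸ hP.1 1 h1 1 h1)

end IsOrdering

section ConjClosure

variable {A : Type*} [Ring A] [StarRing A]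

def conjClosure (a : A) : AddSubgroup A :=
  AddSubgroup.closure (Set.range fun x => star x * a * x)

theorem star_mul_mul_mem_conjClosure (a x : A) : star x * a * x ∈ conjClosure a :=
  AddSubgroup.subset_closure ⟨x, rfl⟩

theorem star_mul_mul_add_star_mul_mul_mem_conjClosure (a u v : A) :
    star u * a * v + star v * a * u ∈ conjClosure a := by
  have hpolar : star u * a * v + star v * a * u =
      star (u + v) * a * (u + v) - star u * a * u - star v * a * v := by
    simp only [star_add, add_mul, mul_add]
    abel
  rw [hpolar]
  exact sub_mem (sub_mem (star_mul_mul_mem_conjClosure a (u + v)) (star_mul_mul_mem_conjClosure a u))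
    (star_mul_mul_mem_conjClosure a v)

theorem add_star_mem_conjClosure {a : A} (ha : star a = a) {m : A}
    (hm : m ∈ TwoSidedIdeal.span {a}) : m + star m ∈ conjClosure a := by
  let symmetrize : A →+ A := AddMonoidHom.id A + (starAddEquiv : A ≃+ A).toAddMonoidHom
  suffices AddSubgroup.closure (Set.univ * {a} * Set.univ) ≤ (conjClosure a).comap symmetrize from
    this (TwoSidedIdeal.mem_span_iff_mem_addSubgroup_closure.mp hm)
  rw [AddSubgroup.closure_le]
  rintro _ ⟨_, ⟨x, -, b, hb, rfl⟩, y, -, rfl⟩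
  rw [Set.mem_singleton_iff.mp hb]
  have hstar : star (x * a * y) = star y * a * star x := by
    rw [star_mul, star_mul, ha, mul_assoc]
  simpa [symmetrize, hstar] using star_mul_mul_add_star_mul_mul_mem_conjClosure a (star x) y

theorem add_star_mem_conjClosure_of_simple (hsimple : ∀ I : TwoSidedIdeal A, I = ⊥ ∨ I = ⊤)
    {a : A} (ha : star a = a) (ha0 : a ≠ 0) (s : A) : s + star s ∈ conjClosure a := by
  have hspan : TwoSidedIdeal.span {a} = ⊤ := by
    refine (hsimple _).resolve_left fun hbot => ha0 ?_
    simpa [hbot] using TwoSidedIdeal.subset_span (Set.mem_singleton a)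
  exact add_star_mem_conjClosure ha (hspan ▸ TwoSidedIdeal.mem_top A)

theorem conjClosure_subset {PC : Set A} (hzero : 0 ∈ PC)
    (hadd : ∀ a ∈ PC, ∀ b ∈ PC, a + b ∈ PC) (hconj : ∀ x : A, ∀ p ∈ PC, star x * p * x ∈ PC)
    {a : A} (ha : a ∈ PC) (hna : -a ∈ PC) : (conjClosure a : Set A) ⊆ PC := by
  intro g hg
  suffices g ∈ PC ∧ -g ∈ PC from this.1
  induction hg using AddSubgroup.closure_induction with
  | mem _ hx =>
    obtain ⟨x, rfl⟩ := hx
    exact ⟨hconj x a ha, by simpa using hconj x (-a) hna⟩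
  | zero => exact ⟨hzero, by simpa using hzero⟩
  | add _ _ _ _ hx hy => exact ⟨hadd _ hx.1 _ hy.1, by simpa only [neg_add] using hadd _ hx.2 _ hy.2⟩
  | neg _ _ hx => exact ⟨hx.2, by simpa only [neg_neg] using hx.1⟩

end ConjClosure

theorem stmt_19_general {F A : Type*} [Field F] [Ring A] [Algebra F A] [StarRing A]
    (h2 : (2 : F) ≠ 0)
    (hsimple : ∀ I : TwoSidedIdeal A, I = ⊥ ∨ I = ⊤)
    (PC : Set A)
    (hsym : ∀ a ∈ PC, star a = a)
    (hne : PC.Nonempty)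
    (hadd : ∀ a ∈ PC, ∀ b ∈ PC, a + b ∈ PC)
    (hconj : ∀ x : A, ∀ p ∈ PC, star x * p * x ∈ PC)
    (hord : IsOrdering {u : F | ∀ p ∈ PC, u • p ∈ PC})
    (himproper : {a | a ∈ PC ∧ -a ∈ PC} ≠ {0}) :
    PC = {a : A | star a = a} := by
  obtain ⟨p, hp⟩ := hne
  have hzero : (0 : A) ∈ PC := by simpa using hconj 0 p hp
  obtain ⟨a, ⟨ha, hna⟩, ha0⟩ : ∃ a, (a ∈ PC ∧ -a ∈ PC) ∧ a ≠ 0 := by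
    by_contra! h
    refine himproper (Set.eq_singleton_iff_unique_mem.mpr ⟨⟨hzero, ?_⟩, h⟩)
    simpa using hzero
  refine Set.Subset.antisymm hsym fun s (hs : star s = s) => ?_
  have hdouble : s + s ∈ PC := conjClosure_subset hzero hadd hconj ha hna
    (by simpa [hs] using add_star_mem_conjClosure_of_simple hsimple (hsym a ha) ha0 s)
  have hhalf : (2 : F)⁻¹ • (s + s) = s := by
    rw [← two_smul F s, smul_smul, inv_mul_cancel₀ h2, one_smul]
  exact hhalf ▸ hord.inv_two_mem (s + s) hdouble

/-- Let `(A, σ)` be an `F`-algebra with involution (finite-dimensional, simple, with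
`F = Z(A) ∩ Sym(A,σ)` and `char F ≠ 2`). If `PC ⊆ Sym(A,σ)` is nonempty, closed under
addition and under `p ↦ σ(x) p x`, has `{u ∈ F | u PC ⊆ PC}` an ordering of `F`, but is
not proper (`PC ∩ -PC ≠ {0}`), then `PC = Sym(A,σ)`. -/
theorem stmt_19 {F A : Type*} [Field F] [Ring A] [Algebra F A] [StarRing A]
    [FiniteDimensional F A] [Nontrivial A] (h2 : (2 : F) ≠ 0)
    (hsimple : ∀ I : TwoSidedIdeal A, I = ⊥ ∨ I = ⊤)
    (hstar : ∀ c : F, star (algebraMap F A c) = algebraMap F A c)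
    (hF : ∀ a : A, (∀ b : A, a * b = b * a) → star a = a → ∃ c : F, algebraMap F A c = a)
    (PC : Set A)
    (hsym : ∀ a ∈ PC, star a = a)
    (hne : PC.Nonempty)
    (hadd : ∀ a ∈ PC, ∀ b ∈ PC, a + b ∈ PC)
    (hconj : ∀ x : A, ∀ p ∈ PC, star x * p * x ∈ PC)
    (hord : IsOrdering {u : F | ∀ p ∈ PC, u • p ∈ PC})
    (himproper : {a | a ∈ PC ∧ -a ∈ PC} ≠ {0}) :
    PC = {a : A | star a = a} :=
  stmt_19_general h2 hsimple PC hsym hne hadd hconj hord himproper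
end
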